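/- Let g : (Fin n → ZMod 2) → ZMod 2 be any function and let a ≥ 0. Let σ be the permutation of (Fin n → ZMod 2) × ZMod 2 × (Fin a → ZMod 2) defined by σ(x, b, z) = (x, b + g(x), z), and let U be the corresponding permutation matrix on n + 1 + a qubits. Let X_O denote the Pauli X gate on the output qubit (the middle register), and let H_{IO} denote the tensor product of Hadamard gates on the n input qubits and the output qubit (and identity on the a ancilla qubits). Then ⟨0| X_O · H_{IO} · U · H_{IO} · X_O |0⟩ = gap(g) / 2^n. -/

import Mathlib

/-- `gap g` is the number of inputs on which `g` evaluates to `0` minus the number of inputs on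
which it evaluates to `1`. -/
def gap {T : Type*} [Fintype T] [DecidableEq T] (g : (T → ZMod 2) → ZMod 2) : ℤ :=
  ∑ x : T → ZMod 2, (-1 : ℤ) ^ (g x).val

/-- Basis states of `n + 1 + a` qubits: an `n`-qubit input register, a 1-qubit output register
and an `a`-qubit ancilla register. -/
abbrev QBasis (n a : ℕ) := (Fin n → ZMod 2) × ZMod 2 × (Fin a → ZMod 2)

/-- The permutation matrix of the permutation `(x, b, z) ↦ (x, b + g(x), z)`. -/
def permU (n a : ℕ) (g : (Fin n → ZMod 2) → ZMod 2) :
    Matrix (QBasis n a) (QBasis n a) ℂ :=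
  fun v w => if v = (w.1, w.2.1 + g w.1, w.2.2) then 1 else 0

/-- The Pauli X gate on the output (middle) register, identity elsewhere. -/
def XO (n a : ℕ) : Matrix (QBasis n a) (QBasis n a) ℂ :=
  fun v w => if v = (w.1, w.2.1 + 1, w.2.2) then 1 else 0

/-- Hadamard gates on the `n` input qubits and the output qubit, identity on the ancillas. -/
noncomputable def HIO (n a : ℕ) : Matrix (QBasis n a) (QBasis n a) ℂ :=
  fun v w =>
    if v.2.2 = w.2.2 then
      (-1 : ℂ) ^ (((∑ i, v.1 i * w.1 i) + v.2.1 * w.2.1 : ZMod 2)).val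
        / (Real.sqrt 2 : ℂ) ^ (n + 1)
    else 0

/-!
Conjugating the phase oracle by Hadamards is phase kickback: the output qubit is flipped to
`|1⟩` by `X_O`, after which the Hadamard on it yields `∑_b (-1)^b |b⟩`, on which `U` acts as
multiplication by `(-1)^{g(x)}`. Expanding both Hadamard layers, the amplitude of the initial
state is `∑_{x,b} (-1)^{b + g(x)} (-1)^b / 2^{n+1} = 2 ∑_x (-1)^{g(x)} / 2^{n+1}`.
-/

open Matrix

lemma ZMod.neg_one_pow_val_add {R : Type*} [Ring R] (c d : ZMod 2) :
    (-1 : R) ^ (c + d).val = (-1) ^ c.val * (-1) ^ d.val := by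
  rw [ZMod.val_add, ← neg_one_pow_eq_pow_mod_two, pow_add]

lemma ZMod.neg_one_pow_val_add_mul_neg_one_pow_val {R : Type*} [Ring R]
    (c d : ZMod 2) : (-1 : R) ^ (c + d).val * (-1) ^ c.val = (-1) ^ d.val := by
  rw [add_comm, ZMod.neg_one_pow_val_add, mul_assoc, ← pow_add, Even.neg_one_pow ⟨_, rfl⟩,
    mul_one]

lemma Complex.ofReal_sqrt_two_pow_mul_self (k : ℕ) :
    ((Real.sqrt 2 : ℂ) ^ k) * (Real.sqrt 2 : ℂ) ^ k = 2 ^ k := by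
  rw [← mul_pow, ← Complex.ofReal_mul, Real.mul_self_sqrt zero_le_two, Complex.ofReal_ofNat]

section Circuit

variable {n a : ℕ}

def oracle (g : (Fin n → ZMod 2) → ZMod 2) : Equiv.Perm (QBasis n a) where
  toFun v := (v.1, v.2.1 + g v.1, v.2.2)
  invFun v := (v.1, v.2.1 - g v.1, v.2.2)
  left_inv v := by simp
  right_inv v := by simp

@[simp]
lemma oracle_apply (g : (Fin n → ZMod 2) → ZMod 2) (v : QBasis n a) :
    oracle g v = (v.1, v.2.1 + g v.1, v.2.2) := rfl

@[simp]
lemma oracle_symm_apply (g : (Fin n → ZMod 2) → ZMod 2) (v : QBasis n a) :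
    (oracle g).symm v = (v.1, v.2.1 - g v.1, v.2.2) := rfl

lemma permU_eq_toMatrix (g : (Fin n → ZMod 2) → ZMod 2) :
    permU n a g = (oracle g).symm.toPEquiv.toMatrix := by
  ext v w
  simp only [permU, PEquiv.toMatrix_apply, Equiv.toPEquiv_apply, Option.mem_def,
    Option.some.injEq, Equiv.symm_apply_eq, eq_comm (a := v), oracle_apply]

lemma mul_permU (g : (Fin n → ZMod 2) → ZMod 2) (A : Matrix (QBasis n a) (QBasis n a) ℂ) :
    A * permU n a g = A.submatrix id (oracle g) := by
  rw [permU_eq_toMatrix, PEquiv.mul_toMatrix_toPEquiv, Equiv.symm_symm]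

lemma permU_mul (g : (Fin n → ZMod 2) → ZMod 2) (A : Matrix (QBasis n a) (QBasis n a) ℂ) :
    permU n a g * A = A.submatrix (oracle g).symm id := by
  rw [permU_eq_toMatrix, PEquiv.toMatrix_toPEquiv_mul]

lemma XO_eq_permU : XO n a = permU n a (fun _ => 1) := rfl

lemma XO_mul_mul_XO_apply_zero (M : Matrix (QBasis n a) (QBasis n a) ℂ) :
    (XO n a * M * XO n a) 0 0 = M (0, 1, 0) (0, 1, 0) := by
  simp [XO_eq_permU, permU_mul, mul_permU]

lemma HIO_comm (v w : QBasis n a) : HIO n a v w = HIO n a w v := by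
  simp only [HIO, mul_comm (v.1 _), mul_comm v.2.1, eq_comm (a := v.2.2)]

lemma HIO_outputOne_apply (x : Fin n → ZMod 2) (c : ZMod 2) (z : Fin a → ZMod 2) :
    HIO n a (0, 1, 0) (x, c, z) = if z = 0 then (-1 : ℂ) ^ c.val / (Real.sqrt 2 : ℂ) ^ (n + 1)
      else 0 := by
  simp [HIO, eq_comm (a := (0 : Fin a → ZMod 2))]

lemma HIO_mul_permU_mul_HIO_apply_outputOne (g : (Fin n → ZMod 2) → ZMod 2) :
    (HIO n a * permU n a g * HIO n a) (0, 1, 0) (0, 1, 0)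
      = ∑ x, ∑ _b : ZMod 2, (-1 : ℂ) ^ (g x).val / 2 ^ (n + 1) := by
  rw [mul_permU, Matrix.mul_apply, Fintype.sum_prod_type]
  refine Finset.sum_congr rfl fun x _ => ?_
  rw [Fintype.sum_prod_type]
  refine Finset.sum_congr rfl fun b _ => ?_
  simp only [submatrix_apply, id, oracle_apply, HIO_comm _ (0, 1, 0), HIO_outputOne_apply,
    ite_mul, zero_mul, mul_ite, mul_zero, Finset.sum_ite_eq', Finset.mem_univ, if_true,
    div_mul_div_comm, Complex.ofReal_sqrt_two_pow_mul_self,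
    ZMod.neg_one_pow_val_add_mul_neg_one_pow_val]

end Circuit

lemma sum_sum_neg_one_pow_div_eq_gap_div {n : ℕ} (g : (Fin n → ZMod 2) → ZMod 2) :
    ∑ x, ∑ _b : ZMod 2, (-1 : ℂ) ^ (g x).val / 2 ^ (n + 1) = ((gap g : ℤ) : ℂ) / 2 ^ n := by
  simp only [Finset.sum_const, Finset.card_univ, ZMod.card, nsmul_eq_mul, gap]
  push_cast
  rw [Finset.sum_div]
  refine Finset.sum_congr rfl fun x _ => ?_
  field_simp
  ring

/-- With `U` the permutation matrix of `σ(x,b,z) = (x, b + g(x), z)`, we have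
`⟨0| X_O · H_IO · U · H_IO · X_O |0⟩ = gap(g) / 2^n`. -/
theorem gap_from_reversible_circuit (n a : ℕ) (g : (Fin n → ZMod 2) → ZMod 2) :
    (XO n a * HIO n a * permU n a g * HIO n a * XO n a)
        ((fun _ => 0), 0, (fun _ => 0)) ((fun _ => 0), 0, (fun _ => 0))
      = ((gap g : ℤ) : ℂ) / 2 ^ n := by
  calc (XO n a * HIO n a * permU n a g * HIO n a * XO n a) 0 0
      = (XO n a * (HIO n a * permU n a g * HIO n a) * XO n a) 0 0 := by
        simp only [Matrix.mul_assoc]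
    _ = ∑ x, ∑ _b : ZMod 2, (-1 : ℂ) ^ (g x).val / 2 ^ (n + 1) := by
        rw [XO_mul_mul_XO_apply_zero, HIO_mul_permU_mul_HIO_apply_outputOne]
    _ = ((gap g : ℤ) : ℂ) / 2 ^ n := sum_sum_neg_one_pow_div_eq_gap_div g
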